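/- Let μ > 0 and let N ≥ 2 be an even integer, so that T_N(μ) is invertible. Then for every n = 1, …, N/2, the 2×2 submatrix of T_N(μ)⁻¹ on rows and columns {N−2n+1, N−2n+2} equals Ĩ = (1/D)·[[d_{N−2n+2} + μ² a_{n−1}, μ],[−μ, d_{N−2n+1} + μ² b_{(N−2n)/2}]], where D = (d_{N−2n+2} + μ² a_{n−1})(d_{N−2n+1} + μ² b_{(N−2n)/2}) + μ². -/

import Mathlib

/-- The `N × N` tridiagonal matrix `T_N(μ)` with diagonal `2, 4, …, 2N`, subdiagonal `μ`
and superdiagonal `-μ` (0-based indexing). -/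
noncomputable def Tmat (N : ℕ) (μ : ℝ) : Matrix (Fin N) (Fin N) ℝ :=
  Matrix.of fun i j =>
    if (i : ℕ) = (j : ℕ) then 2 * (((i : ℕ) : ℝ) + 1)
    else if (i : ℕ) = (j : ℕ) + 1 then μ
    else if (j : ℕ) = (i : ℕ) + 1 then -μ
    else 0

/-- The recursive sequence `a_j` (with `d_i = 2i`):
`a_j = (d_{N−2j+2} + a_{j−1}μ²)/(d_{N−2j+1}d_{N−2j+2} + a_{j−1}d_{N−2j+1}μ² + μ²)`, `a_0 = 0`. -/
noncomputable def aSeq (μ : ℝ) (N : ℕ) : ℕ → ℝ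
  | 0 => 0
  | j + 1 =>
      (2 * ((N : ℝ) - 2 * ((j : ℝ) + 1) + 2) + aSeq μ N j * μ ^ 2) /
        (2 * ((N : ℝ) - 2 * ((j : ℝ) + 1) + 1) * (2 * ((N : ℝ) - 2 * ((j : ℝ) + 1) + 2)) +
          aSeq μ N j * (2 * ((N : ℝ) - 2 * ((j : ℝ) + 1) + 1)) * μ ^ 2 + μ ^ 2)

/-- The recursive sequence `â_j`:
`â_j = μ/(d_{N−2j+1}d_{N−2j+2} + a_{j−1}d_{N−2j+1}μ² + μ²)`, `â_0 = 0`. -/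
noncomputable def ahatSeq (μ : ℝ) (N : ℕ) : ℕ → ℝ
  | 0 => 0
  | j + 1 =>
      μ / (2 * ((N : ℝ) - 2 * ((j : ℝ) + 1) + 1) * (2 * ((N : ℝ) - 2 * ((j : ℝ) + 1) + 2)) +
          aSeq μ N j * (2 * ((N : ℝ) - 2 * ((j : ℝ) + 1) + 1)) * μ ^ 2 + μ ^ 2)

/-- The recursive sequence `b_j`:
`b_j = (d_{2j−1} + b_{j−1}μ²)/(d_{2j}d_{2j−1} + b_{j−1}d_{2j}μ² + μ²)`, `b_0 = 0`. -/
noncomputable def bSeq (μ : ℝ) : ℕ → ℝ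
  | 0 => 0
  | j + 1 =>
      (2 * (2 * ((j : ℝ) + 1) - 1) + bSeq μ j * μ ^ 2) /
        (2 * (2 * ((j : ℝ) + 1)) * (2 * (2 * ((j : ℝ) + 1) - 1)) +
          bSeq μ j * (2 * (2 * ((j : ℝ) + 1))) * μ ^ 2 + μ ^ 2)

/-- The determinant `D = (d_{N−2n+2} + μ² a_{n−1})(d_{N−2n+1} + μ² b_{(N−2n)/2}) + μ²`. -/
noncomputable def Dden (μ : ℝ) (N n : ℕ) : ℝ :=
  (2 * (((N - 2 * n : ℕ) : ℝ) + 2) + μ ^ 2 * aSeq μ N (n - 1)) *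
      (2 * (((N - 2 * n : ℕ) : ℝ) + 1) + μ ^ 2 * bSeq μ ((N - 2 * n) / 2)) + μ ^ 2

/-- The `2 × 2` matrix `Ĩ = (1/D)·[[d_{N−2n+2} + μ² a_{n−1}, μ], [−μ, d_{N−2n+1} + μ² b_{(N−2n)/2}]]`. -/
noncomputable def Itil (μ : ℝ) (N n : ℕ) : Matrix (Fin 2) (Fin 2) ℝ :=
  !![(2 * (((N - 2 * n : ℕ) : ℝ) + 2) + μ ^ 2 * aSeq μ N (n - 1)) / Dden μ N n,
      μ / Dden μ N n;
     -μ / Dden μ N n,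
      (2 * (((N - 2 * n : ℕ) : ℝ) + 1) + μ ^ 2 * bSeq μ ((N - 2 * n) / 2)) / Dden μ N n]

/-!
`T = T_N(μ)` is a positive diagonal matrix plus a skew-symmetric one, so
`vᵀ T v = Σ 2(i+1) v_i² > 0` for `v ≠ 0` and `T` is invertible.

For the block `{p, p+1}` (0-based, `p = N - 2n`) we solve `T x = e_c` explicitly. Above the block
the rows are homogeneous, which forces `x_{k-1} = ρ_k x_k` with the continued fraction
`ρ_{k+1} = μ / (d_k + μ ρ_k)`, `ρ_0 = 0`, where `d_k = 2(k+1)` is the 0-based diagonal. Below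
the block the same happens after the reflection `k ↦ N-1-k` with signs `(-1)^k`, which turns `T`
into the tridiagonal matrix with the diagonal reversed. The two block rows then read `[[B, -μ], [μ, A]] (x_p, x_{p+1}) = e_c` with
`B = d_p + μ ρ_p` and `A` its reflected counterpart. Two steps of the continued fraction are exactly
the recursions for `b_j` and `a_j`, so `μ ρ_p = μ² b_{p/2}`, and similarly for `A`. Inverting this
`2 × 2` Schur complement gives `Ĩ`.
-/

open Matrix Finset

lemma isUnit_of_forall_dotProduct_mulVec_pos {n K : Type*} [Fintype n] [DecidableEq n]
    [Field K] [Preorder K] {A : Matrix n n K} (hA : ∀ v ≠ 0, 0 < v ⬝ᵥ (A *ᵥ v)) : IsUnit A := by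
  rw [isUnit_iff_isUnit_det, isUnit_iff_ne_zero]
  intro hdet
  obtain ⟨v, hv, hAv⟩ := exists_mulVec_eq_zero_iff.2 hdet
  simpa [hAv] using hA v hv

lemma dotProduct_mulVec_self_eq_zero_of_transpose_eq_neg {n R : Type*} [Fintype n]
    [CommRing R] [IsAddTorsionFree R] {K : Matrix n n R} (hK : Kᵀ = -K) (v : n → R) :
    v ⬝ᵥ (K *ᵥ v) = 0 := by
  refine self_eq_neg.1 ?_
  conv_lhs => rw [dotProduct_mulVec, ← mulVec_transpose, hK, dotProduct_comm]
  simp [neg_mulVec]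

lemma inv_apply_of_mulVec_eq_single {n R : Type*} [Fintype n] [DecidableEq n] [CommRing R]
    {A : Matrix n n R} (hA : IsUnit A) {x : n → R} {c : n} (h : A *ᵥ x = Pi.single c 1) (r : n) :
    A⁻¹ r c = x r := by
  have hx := congrArg (A⁻¹ *ᵥ ·) h
  simp only [mulVec_mulVec, nonsing_inv_mul _ ((isUnit_iff_isUnit_det A).1 hA), one_mulVec,
    mulVec_single_one] at hx
  exact (congrFun hx r).symm

def tDiag (k : ℕ) : ℝ := 2 * ((k : ℝ) + 1)

def tDiagRev (N k : ℕ) : ℝ := 2 * ((N : ℝ) - k)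

lemma tDiag_pos (k : ℕ) : 0 < tDiag k := by
  unfold tDiag
  positivity

lemma tDiagRev_pos {N k : ℕ} (hk : k < N) : 0 < tDiagRev N k := by
  unfold tDiagRev
  linarith [(Nat.cast_lt (α := ℝ)).2 hk]

lemma Tmat_zero (N : ℕ) : Tmat N 0 = diagonal fun i : Fin N => tDiag i := by
  ext i j
  simp only [Tmat, tDiag, of_apply, diagonal_apply, Fin.val_inj, neg_zero]
  split_ifs <;> first | omega | simp_all

lemma transpose_Tmat_sub_Tmat_zero (N : ℕ) (μ : ℝ) :
    (Tmat N μ - Tmat N 0)ᵀ = -(Tmat N μ - Tmat N 0) := by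
  ext i j
  simp only [Tmat, transpose_apply, Matrix.sub_apply, Matrix.neg_apply, of_apply, neg_zero]
  split_ifs <;> first | omega | ring

lemma dotProduct_Tmat_mulVec (N : ℕ) (μ : ℝ) (v : Fin N → ℝ) :
    v ⬝ᵥ (Tmat N μ *ᵥ v) = ∑ i : Fin N, tDiag i * v i ^ 2 := by
  have hskew := dotProduct_mulVec_self_eq_zero_of_transpose_eq_neg
    (transpose_Tmat_sub_Tmat_zero N μ) v
  rw [sub_mulVec, dotProduct_sub, sub_eq_zero] at hskew
  rw [hskew, Tmat_zero, dotProduct]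
  congr 1 with i
  rw [mulVec_diagonal]
  ring

lemma isUnit_Tmat (N : ℕ) (μ : ℝ) : IsUnit (Tmat N μ) := by
  refine isUnit_of_forall_dotProduct_mulVec_pos fun v hv => ?_
  obtain ⟨i, hi⟩ := Function.ne_iff.1 hv
  rw [dotProduct_Tmat_mulVec]
  exact sum_pos' (fun j _ => mul_nonneg (tDiag_pos j).le (sq_nonneg _))
    ⟨i, mem_univ i, mul_pos (tDiag_pos i) (sq_pos_of_ne_zero hi)⟩

noncomputable def tridiagRow (d : ℕ → ℝ) (μ : ℝ) (x : ℕ → ℝ) (i : ℕ) : ℝ :=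
  (if i = 0 then 0 else μ * x (i - 1)) + d i * x i - μ * x (i + 1)

lemma tridiag_ite_eq_add (i j : ℕ) (a b c : ℝ) :
    (if i = j then a else if i = j + 1 then b else if j = i + 1 then c else 0) =
      (if j = i then a else 0) + (if j + 1 = i then b else 0) + (if j = i + 1 then c else 0) := by
  split_ifs <;> first | omega | ring

lemma Tmat_mulVec_apply (N : ℕ) (μ : ℝ) (x : ℕ → ℝ) (hx : x N = 0) (i : Fin N) :
    (Tmat N μ *ᵥ fun j => x j) i = tridiagRow tDiag μ x i := by
  simp only [mulVec, dotProduct, Tmat, of_apply, tridiag_ite_eq_add]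
  rw [Fin.sum_univ_eq_sum_range (fun j => ((if j = (i : ℕ) then 2 * (((i : ℕ) : ℝ) + 1) else 0) +
    (if j + 1 = (i : ℕ) then μ else 0) + (if j = (i : ℕ) + 1 then -μ else 0)) * x j)]
  obtain ⟨i, hi⟩ := i
  have hlast : (if i + 1 < N then -μ * x (i + 1) else 0) = -μ * x (i + 1) := by
    split_ifs with h
    · rfl
    · rw [show i + 1 = N by omega, hx, mul_zero]
  simp only [add_mul, ite_mul, zero_mul, sum_add_distrib, sum_ite_eq', mem_range, hi, if_true,
    hlast, tridiagRow, tDiag]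
  rcases i with _ | k
  · simp [sub_eq_add_neg]
  · simp only [Nat.cast_add, Nat.cast_one, Nat.add_right_cancel_iff, sum_ite_eq', mem_range,
      show k < N by omega, ↓reduceIte, neg_mul, Nat.add_eq_zero_iff, one_ne_zero, and_false,
      add_tsub_cancel_right]
    ring

/-- `cfrac d μ k` is the ratio `x_{k-1} / x_k` forced on a vector `x` by the homogeneous rows
`0, …, k-1` of the tridiagonal matrix with diagonal `d`, subdiagonal `μ` and superdiagonal `-μ`. -/
noncomputable def cfrac (d : ℕ → ℝ) (μ : ℝ) : ℕ → ℝ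
  | 0 => 0
  | k + 1 => μ / (d k + μ * cfrac d μ k)

noncomputable def cfracEven (d : ℕ → ℝ) (μ : ℝ) : ℕ → ℝ
  | 0 => 0
  | j + 1 => (d (2 * j) + cfracEven d μ j * μ ^ 2) /
      (d (2 * j + 1) * d (2 * j) + cfracEven d μ j * d (2 * j + 1) * μ ^ 2 + μ ^ 2)

section cfrac

variable {d : ℕ → ℝ} {μ : ℝ}

lemma cfrac_succ_mul (k : ℕ) (h : d k + μ * cfrac d μ k ≠ 0) :
    cfrac d μ (k + 1) * (d k + μ * cfrac d μ k) = μ :=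
  div_mul_cancel₀ μ h

lemma cfrac_nonneg (hμ : 0 ≤ μ) {m : ℕ} (hd : ∀ k < m, 0 < d k) :
    ∀ k ≤ m, 0 ≤ cfrac d μ k
  | 0, _ => le_rfl
  | k + 1, hk => by
    have := cfrac_nonneg hμ hd k (by omega)
    have := hd k (by omega)
    rw [cfrac]
    positivity

lemma cfrac_denom_pos (hμ : 0 ≤ μ) {m : ℕ} (hd : ∀ k ≤ m, 0 < d k) {k : ℕ} (hk : k ≤ m) :
    0 < d k + μ * cfrac d μ k := by
  have := cfrac_nonneg hμ (fun i hi => hd i (by omega)) k le_rfl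
  have := hd k hk
  positivity

lemma cfrac_two_mul (hμ : 0 ≤ μ) {j : ℕ} (hd : ∀ k < 2 * j, 0 < d k) :
    cfrac d μ (2 * j) = μ * cfracEven d μ j := by
  induction j with
  | zero => simp [cfrac, cfracEven]
  | succ j ih =>
    have hE := cfrac_denom_pos hμ (m := 2 * j) (fun k hk => hd k (by omega)) le_rfl
    rw [show 2 * (j + 1) = 2 * j + 1 + 1 by ring, cfrac, cfrac, cfracEven]
    rw [ih (fun k hk => hd k (by omega))] at hE ⊢
    rw [← mul_div_assoc, ← mul_div_assoc, add_div' _ _ _ hE.ne', div_div_eq_mul_div]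
    congr 1 <;> ring

end cfrac

lemma bSeq_eq_cfracEven (μ : ℝ) : bSeq μ = cfracEven tDiag μ := by
  funext j
  induction j with
  | zero => rfl
  | succ j ih =>
    rw [bSeq, cfracEven, ih]
    simp only [tDiag]
    push_cast
    ring_nf

lemma aSeq_eq_cfracEven (μ : ℝ) (N : ℕ) : aSeq μ N = cfracEven (tDiagRev N) μ := by
  funext j
  induction j with
  | zero => rfl
  | succ j ih =>
    rw [aSeq, cfracEven, ih]
    simp only [tDiagRev]
    push_cast
    ring_nf

section tridiagRow

variable {d : ℕ → ℝ} {μ : ℝ} {x : ℕ → ℝ} {p : ℕ}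

lemma tridiagRow_of_ratio {c : ℕ → ℝ} (hc : c 0 = 0)
    (hx : ∀ k < p, x k = c (k + 1) * x (k + 1)) {i : ℕ} (hi : i ≤ p) :
    tridiagRow d μ x i = (d i + μ * c i) * x i - μ * x (i + 1) := by
  rcases i with _ | i
  · simp [tridiagRow, hc]
  · simp only [tridiagRow, Nat.add_one_ne_zero, if_false, Nat.add_sub_cancel, hx i (by omega)]
    ring

lemma tridiagRow_eq_zero_of_ratio (hμ : 0 ≤ μ) (hd : ∀ k < p, 0 < d k)
    (hx : ∀ k < p, x k = cfrac d μ (k + 1) * x (k + 1)) {i : ℕ} (hi : i < p) :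
    tridiagRow d μ x i = 0 := by
  have hE := cfrac_denom_pos hμ (m := i) (fun k hk => hd k (by omega)) le_rfl
  rw [tridiagRow_of_ratio rfl hx hi.le, hx i hi, ← mul_assoc, mul_comm _ (cfrac d μ _),
    cfrac_succ_mul i hE.ne', sub_self]

lemma tridiagRow_reflect {f : ℕ → ℝ} {N : ℕ} (hxN : x N = 0)
    (hf : ∀ m < N, f m = d (N - 1 - m)) {m : ℕ} (hm : m + 1 < N) :
    tridiagRow d μ x (N - 1 - m) =
      (-1) ^ m * tridiagRow f μ (fun k => (-1) ^ k * x (N - 1 - k)) m := by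
  rw [tridiagRow, tridiagRow, if_neg (by omega), hf m (by omega),
    show N - 1 - m - 1 = N - 1 - (m + 1) by omega]
  rcases m with _ | m
  · rw [show N - 1 - 0 + 1 = N by omega, hxN]
    simp only [zero_add, tsub_zero, mul_zero, pow_zero, ↓reduceIte, one_mul, pow_one,
      neg_mul, mul_neg, sub_neg_eq_add]
    ring
  · rw [if_neg (by omega), show N - 1 - (m + 1) + 1 = N - 1 - m by omega, Nat.add_sub_cancel]
    simp only [pow_succ]
    rcases neg_one_pow_eq_or ℝ m with h | h <;> rw [h] <;> ring

end tridiagRow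

noncomputable def chainVec (c : ℕ → ℝ) (p : ℕ) (v : ℝ) (k : ℕ) : ℝ :=
  (∏ t ∈ Ico k p, c (t + 1)) * v

lemma chainVec_self (c : ℕ → ℝ) (p : ℕ) (v : ℝ) : chainVec c p v p = v := by
  simp [chainVec]

lemma chainVec_of_lt (c : ℕ → ℝ) {p : ℕ} (v : ℝ) {k : ℕ} (hk : k < p) :
    chainVec c p v k = c (k + 1) * chainVec c p v (k + 1) := by
  rw [chainVec, chainVec, prod_eq_prod_Ico_succ_bot hk, mul_assoc]

/-- Away from rows `p` and `p + 1`, `T_N(μ)` kills this vector; `x_p = v₀` and `x_{p+1} = v₁`. -/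
noncomputable def blockSol (N p : ℕ) (μ v₀ v₁ : ℝ) (k : ℕ) : ℝ :=
  if k ≤ p then chainVec (cfrac tDiag μ) p v₀ k
  else if k < N then
    (-1) ^ (N - 1 - k) * chainVec (cfrac (tDiagRev N) μ) (N - 2 - p) v₁ (N - 1 - k)
  else 0

noncomputable def schurDiag₀ (μ : ℝ) (p : ℕ) : ℝ := tDiag p + μ * cfrac tDiag μ p

noncomputable def schurDiag₁ (N : ℕ) (μ : ℝ) (p : ℕ) : ℝ :=
  tDiagRev N (N - 2 - p) + μ * cfrac (tDiagRev N) μ (N - 2 - p)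

section blockSol

variable {N p : ℕ} {μ v₀ v₁ : ℝ}

lemma blockSol_of_le {k : ℕ} (hk : k ≤ p) :
    blockSol N p μ v₀ v₁ k = chainVec (cfrac tDiag μ) p v₀ k :=
  if_pos hk

lemma blockSol_of_ge (hp : p < N) {k : ℕ} (hk : N ≤ k) : blockSol N p μ v₀ v₁ k = 0 := by
  rw [blockSol, if_neg (by omega), if_neg (by omega)]

lemma blockSol_rev (hp : p + 2 ≤ N) {m : ℕ} (hm : m ≤ N - 2 - p) :
    (-1) ^ m * blockSol N p μ v₀ v₁ (N - 1 - m) =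
      chainVec (cfrac (tDiagRev N) μ) (N - 2 - p) v₁ m := by
  rw [blockSol, if_neg (by omega), if_pos (by omega), show N - 1 - (N - 1 - m) = m by omega,
    ← mul_assoc, ← mul_pow, neg_one_mul, neg_neg, one_pow, one_mul]

lemma blockSol_rev_ratio (hp : p + 2 ≤ N) {k : ℕ} (hk : k < N - 2 - p) :
    (-1) ^ k * blockSol N p μ v₀ v₁ (N - 1 - k) =
      cfrac (tDiagRev N) μ (k + 1) *
        ((-1) ^ (k + 1) * blockSol N p μ v₀ v₁ (N - 1 - (k + 1))) := by
  rw [blockSol_rev hp hk.le, blockSol_rev hp hk, chainVec_of_lt _ _ hk]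

lemma blockSol_succ (hp : p + 2 ≤ N) (hq : Even (N - 2 - p)) :
    blockSol N p μ v₀ v₁ (p + 1) = v₁ := by
  have h := blockSol_rev (μ := μ) (v₀ := v₀) (v₁ := v₁) hp le_rfl
  rwa [show N - 1 - (N - 2 - p) = p + 1 by omega, hq.neg_one_pow, one_mul, chainVec_self] at h

lemma tridiagRow_blockSol_of_lt (hμ : 0 ≤ μ) {i : ℕ} (hi : i < p) :
    tridiagRow tDiag μ (blockSol N p μ v₀ v₁) i = 0 := by
  refine tridiagRow_eq_zero_of_ratio hμ (fun k _ => tDiag_pos k) (fun k hk => ?_) hi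
  rw [blockSol_of_le hk.le, blockSol_of_le hk, chainVec_of_lt _ _ hk]

lemma tridiagRow_blockSol_self (hp : p + 2 ≤ N) (hq : Even (N - 2 - p)) :
    tridiagRow tDiag μ (blockSol N p μ v₀ v₁) p = schurDiag₀ μ p * v₀ - μ * v₁ := by
  rw [schurDiag₀, tridiagRow_of_ratio (c := cfrac tDiag μ) (p := p) rfl (fun k hk => ?_) le_rfl,
    blockSol_succ hp hq, blockSol_of_le le_rfl, chainVec_self]
  rw [blockSol_of_le hk.le, blockSol_of_le hk, chainVec_of_lt _ _ hk]

lemma tridiagRow_blockSol_rev (hp : p + 2 ≤ N) {m : ℕ} (hm : m ≤ N - 2 - p) :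
    tridiagRow tDiag μ (blockSol N p μ v₀ v₁) (N - 1 - m) =
      (-1) ^ m *
        tridiagRow (tDiagRev N) μ (fun k => (-1) ^ k * blockSol N p μ v₀ v₁ (N - 1 - k)) m := by
  refine tridiagRow_reflect (blockSol_of_ge (by omega) le_rfl) (fun k hk => ?_) (by omega)
  rw [tDiag, tDiagRev, Nat.cast_sub (by omega), Nat.cast_sub (by omega)]
  push_cast
  ring

lemma tridiagRow_blockSol_of_succ_lt (hμ : 0 ≤ μ) (hp : p + 2 ≤ N) {i : ℕ} (hi : p + 1 < i)
    (hiN : i < N) : tridiagRow tDiag μ (blockSol N p μ v₀ v₁) i = 0 := by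
  obtain ⟨m, rfl⟩ : ∃ m, i = N - 1 - m := ⟨N - 1 - i, by omega⟩
  rw [tridiagRow_blockSol_rev hp (by omega), tridiagRow_eq_zero_of_ratio hμ (p := N - 2 - p)
    (fun k hk => tDiagRev_pos (by omega))
    (fun k hk => blockSol_rev_ratio hp hk) (by omega), mul_zero]

lemma tridiagRow_blockSol_succ (hp : p + 2 ≤ N) (hq : Even (N - 2 - p)) :
    tridiagRow tDiag μ (blockSol N p μ v₀ v₁) (p + 1) =
      μ * v₀ + schurDiag₁ N μ p * v₁ := by
  have h := tridiagRow_blockSol_rev (μ := μ) (v₀ := v₀) (v₁ := v₁) hp le_rfl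
  rw [show N - 1 - (N - 2 - p) = p + 1 by omega, hq.neg_one_pow, one_mul] at h
  rw [h, schurDiag₁,
    tridiagRow_of_ratio (c := cfrac (tDiagRev N) μ) rfl (fun k hk => blockSol_rev_ratio hp hk)
      le_rfl, blockSol_rev hp le_rfl, chainVec_self, pow_succ, hq.neg_one_pow,
    show N - 1 - (N - 2 - p + 1) = p by omega, blockSol_of_le le_rfl, chainVec_self]
  ring

end blockSol

section block

variable {N p : ℕ} {μ : ℝ}

lemma schurDiag₀_pos (hμ : 0 ≤ μ) : 0 < schurDiag₀ μ p :=
  cfrac_denom_pos hμ (m := p) (fun k _ => tDiag_pos k) le_rfl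

lemma schurDiag₁_pos (hμ : 0 ≤ μ) (hp : p + 2 ≤ N) : 0 < schurDiag₁ N μ p :=
  cfrac_denom_pos (d := tDiagRev N) hμ (m := N - 2 - p) (fun k hk => tDiagRev_pos (by omega))
    le_rfl

lemma schurDiag₀_eq (hμ : 0 ≤ μ) (hp : Even p) :
    schurDiag₀ μ p = 2 * ((p : ℝ) + 1) + μ ^ 2 * bSeq μ (p / 2) := by
  rw [schurDiag₀, ← Nat.two_mul_div_two_of_even hp, cfrac_two_mul hμ (fun k _ => tDiag_pos k),
    bSeq_eq_cfracEven, Nat.two_mul_div_two_of_even hp, tDiag]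
  ring

lemma schurDiag₁_eq (hμ : 0 ≤ μ) (hp : p + 2 ≤ N) (hq : Even (N - 2 - p)) :
    schurDiag₁ N μ p = 2 * ((p : ℝ) + 2) + μ ^ 2 * aSeq μ N ((N - 2 - p) / 2) := by
  rw [schurDiag₁, ← Nat.two_mul_div_two_of_even hq,
    cfrac_two_mul hμ (fun k hk => tDiagRev_pos (by omega)), aSeq_eq_cfracEven,
    Nat.two_mul_div_two_of_even hq, tDiagRev, Nat.cast_sub (by omega : p ≤ N - 2),
    Nat.cast_sub (by omega : 2 ≤ N)]
  push_cast
  ring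

lemma Tmat_mulVec_blockSol (hμ : 0 ≤ μ) (hp : p + 2 ≤ N) (hq : Even (N - 2 - p)) (v₀ v₁ : ℝ)
    (i : Fin N) : (Tmat N μ *ᵥ fun j => blockSol N p μ v₀ v₁ j) i =
      if (i : ℕ) = p then schurDiag₀ μ p * v₀ - μ * v₁
      else if (i : ℕ) = p + 1 then μ * v₀ + schurDiag₁ N μ p * v₁ else 0 := by
  rw [Tmat_mulVec_apply _ _ _ (blockSol_of_ge (by omega) le_rfl)]
  obtain ⟨i, hi⟩ := i
  dsimp only
  split_ifs with h₀ h₁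
  · subst h₀; exact tridiagRow_blockSol_self hp hq
  · subst h₁; exact tridiagRow_blockSol_succ hp hq
  · rcases lt_or_gt_of_ne h₀ with h | h
    · exact tridiagRow_blockSol_of_lt hμ h
    · exact tridiagRow_blockSol_of_succ_lt hμ hp (by omega) hi

lemma Tmat_inv_apply_of_block_eq (hμ : 0 ≤ μ) (hp : p + 2 ≤ N) (hq : Even (N - 2 - p))
    {v₀ v₁ : ℝ} {c : Fin N} (hc : (c : ℕ) = p ∨ (c : ℕ) = p + 1)
    (h₀ : schurDiag₀ μ p * v₀ - μ * v₁ = if (c : ℕ) = p then 1 else 0)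
    (h₁ : μ * v₀ + schurDiag₁ N μ p * v₁ = if (c : ℕ) = p + 1 then 1 else 0) (r : Fin N) :
    (Tmat N μ)⁻¹ r c = blockSol N p μ v₀ v₁ r := by
  refine inv_apply_of_mulVec_eq_single (x := fun j => blockSol N p μ v₀ v₁ j) (isUnit_Tmat N μ)
    (funext fun i => ?_) r
  rw [Tmat_mulVec_blockSol hμ hp hq, Pi.single_apply]
  simp only [Fin.ext_iff]
  split_ifs at h₀ h₁ ⊢ <;> first | omega | assumption | rfl

theorem Tmat_inv_block (hμ : 0 ≤ μ) (hp : p + 2 ≤ N) (hq : Even (N - 2 - p)) (r s : Fin 2) :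
    (Tmat N μ)⁻¹ ⟨p + r, by omega⟩ ⟨p + s, by omega⟩ =
      !![schurDiag₁ N μ p, μ; -μ, schurDiag₀ μ p] r s /
        (schurDiag₁ N μ p * schurDiag₀ μ p + μ ^ 2) := by
  have hA := schurDiag₁_pos hμ hp
  have hB := schurDiag₀_pos (p := p) hμ
  have hD : schurDiag₁ N μ p * schurDiag₀ μ p + μ ^ 2 ≠ 0 := by positivity
  set A := schurDiag₁ N μ p
  set B := schurDiag₀ μ p
  have col₀ (r : Fin N) : (Tmat N μ)⁻¹ r ⟨p, by omega⟩ =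
      blockSol N p μ (A / (A * B + μ ^ 2)) (-μ / (A * B + μ ^ 2)) r :=
    Tmat_inv_apply_of_block_eq hμ hp hq (Or.inl rfl) (by rw [if_pos rfl]; field_simp; ring)
      (by rw [if_neg (show ¬p = p + 1 by omega)]; ring) r
  have col₁ (r : Fin N) : (Tmat N μ)⁻¹ r ⟨p + 1, by omega⟩ =
      blockSol N p μ (μ / (A * B + μ ^ 2)) (B / (A * B + μ ^ 2)) r :=
    Tmat_inv_apply_of_block_eq hμ hp hq (Or.inr rfl)
      (by rw [if_neg (show ¬p + 1 = p by omega)]; ring)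
      (by rw [if_pos rfl]; field_simp; ring) r
  fin_cases r <;> fin_cases s
  all_goals simp [col₀, col₁, blockSol_of_le, chainVec_self, blockSol_succ hp hq]

end block

/-- The `2 × 2` submatrix of `T_N(μ)⁻¹` on (1-based) rows and columns
`{N−2n+1, N−2n+2}` equals `Ĩ`. -/
theorem stmt5 (μ : ℝ) (hμ : 0 < μ) (N : ℕ) (hNe : Even N)
    (n : ℕ) (hn1 : 1 ≤ n) (hn2 : n ≤ N / 2) :
    IsUnit (Tmat N μ) ∧
    ∀ r s : Fin 2,
      (Tmat N μ)⁻¹ ⟨N - 2 * n + (r : ℕ), by have := r.isLt; omega⟩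
          ⟨N - 2 * n + (s : ℕ), by have := s.isLt; omega⟩
        = Itil μ N n r s := by
  refine ⟨isUnit_Tmat N μ, fun r s => ?_⟩
  have hp : N - 2 * n + 2 ≤ N := by omega
  have hq : Even (N - 2 - (N - 2 * n)) := ⟨n - 1, by omega⟩
  have hpe : Even (N - 2 * n) := by
    obtain ⟨k, hk⟩ := hNe
    exact ⟨k - n, by omega⟩
  rw [Tmat_inv_block hμ.le hp hq, schurDiag₀_eq hμ.le hpe, schurDiag₁_eq hμ.le hp hq,
    show (N - 2 - (N - 2 * n)) / 2 = n - 1 by omega]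
  fin_cases r <;> fin_cases s <;> simp [Itil, Dden]
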